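/- arXiv:1203.2571 — 5 statements merged into one kernel-verified Lean document; each statement's English description precedes it below -/
import Mathlib

section
/- For χ in the positive orthant Γ_n and 1 ≤ k ≤ n, the Hessian of g(χ) = log σ_k(χ) is negative semidefinite, i.e., log σ_k is concave on Γ_n. -/
open Finset

/-- The `k`-th elementary symmetric polynomial in `n` real variables. -/
noncomputable def esymm (n k : ℕ) (x : Fin n → ℝ) : ℝ :=
  ∑ s ∈ Finset.univ.powersetCard k, ∏ i ∈ s, x i

/-- The `k`-th elementary symmetric polynomial of the variables with the
`i`-th one removed. -/
noncomputable def esymmOmit (n k : ℕ) (x : Fin n → ℝ) (i : Fin n) : ℝ :=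
  ∑ s ∈ (Finset.univ.erase i).powersetCard k, ∏ j ∈ s, x j

/-- The `i`-th partial derivative of a function of `n` real variables. -/
noncomputable def pd (n : ℕ) (g : (Fin n → ℝ) → ℝ) (i : Fin n) (χ : Fin n → ℝ) : ℝ :=
  fderiv ℝ g χ (Pi.single i 1)

/-- The positive orthant `Γ_n`. -/
def Gamma (n : ℕ) : Set (Fin n → ℝ) := {χ | ∀ i, 0 < χ i}

/-
Write `E_k` for the `k`-th elementary symmetric polynomial and `q_k = E_{k+1} / E_k`. Then
`log E_k = ∑_{j < k} log q_j` on the positive orthant, so it suffices that each `q_j` is concave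
there. Being homogeneous of degree one, `q_j` is concave as soon as it is superadditive, which is
the Marcus–Lopes inequality. It is proved by induction on `j` from the identity
`(j + 2) q_{j+1}(x) = ∑_i x_i : q_j(x without x_i)`, where `a : b = ab / (a + b)` is the parallel
sum, which is monotone and jointly superadditive on positive reals.
-/

noncomputable def parallelSum (a b : ℝ) : ℝ :=
  a * b / (a + b)

lemma parallelSum_le_parallelSum_right {a b c : ℝ} (ha : 0 < a) (hb : 0 < b) (hbc : b ≤ c) :
    parallelSum a b ≤ parallelSum a c := by
  rw [parallelSum, parallelSum, div_le_div_iff₀ (by positivity) (by linarith)]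
  nlinarith [mul_pos ha ha]

lemma parallelSum_add_le {a b c d : ℝ} (ha : 0 < a) (hb : 0 < b) (hc : 0 < c) (hd : 0 < d) :
    parallelSum a c + parallelSum b d ≤ parallelSum (a + b) (c + d) := by
  rw [parallelSum, parallelSum, parallelSum, div_add_div _ _ (by positivity) (by positivity),
    div_le_div_iff₀ (by positivity) (by positivity)]
  nlinarith [sq_nonneg (a * d - b * c), mul_pos ha hb, mul_pos hc hd,
    mul_pos (mul_pos ha hb) (mul_pos hc hd)]

theorem ConcaveOn.log {E : Type*} [AddCommMonoid E] [Module ℝ E] {s : Set E} {f : E → ℝ}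
    (hf : ConcaveOn ℝ s f) (hpos : ∀ x ∈ s, 0 < f x) : ConcaveOn ℝ s fun x => Real.log (f x) :=
  ⟨hf.1, fun x hx y hy _ _ ha hb hab =>
    (strictConcaveOn_log_Ioi.concaveOn.2 (hpos x hx) (hpos y hy) ha hb hab).trans
      (Real.log_le_log ((convex_Ioi (0 : ℝ)) (hpos x hx) (hpos y hy) ha hb hab)
        (hf.2 hx hy ha hb hab))⟩

section EsymmOn

variable {ι : Type*} {s : Finset ι} {k : ℕ} {x : ι → ℝ}

noncomputable def esymmOn (s : Finset ι) (k : ℕ) (x : ι → ℝ) : ℝ :=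
  ∑ t ∈ s.powersetCard k, ∏ i ∈ t, x i

lemma esymmOn_zero : esymmOn s 0 x = 1 := by
  simp [esymmOn]

lemma esymmOn_one : esymmOn s 1 x = ∑ i ∈ s, x i := by
  simp [esymmOn, powersetCard_one]

lemma esymmOn_pos (hk : k ≤ #s) (hx : ∀ i ∈ s, 0 < x i) : 0 < esymmOn s k x :=
  sum_pos (fun _ ht => prod_pos fun i hi => hx i ((mem_powersetCard.1 ht).1 hi))
    (powersetCard_nonempty.2 hk)

lemma esymmOn_smul (a : ℝ) : esymmOn s k (a • x) = a ^ k * esymmOn s k x := by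
  rw [esymmOn, esymmOn, mul_sum]
  refine sum_congr rfl fun t ht => ?_
  simp only [Pi.smul_apply, smul_eq_mul, prod_mul_distrib, prod_const, (mem_powersetCard.1 ht).2]

lemma esymmOn_insert [DecidableEq ι] {i : ι} (hi : i ∉ s) (k : ℕ) (x : ι → ℝ) :
    esymmOn (insert i s) (k + 1) x = esymmOn s (k + 1) x + x i * esymmOn s k x := by
  rw [esymmOn, powersetCard_succ_insert hi, sum_union, sum_image, esymmOn, esymmOn, mul_sum]
  · refine congrArg _ (sum_congr rfl fun t ht => prod_insert ?_)
    exact fun h => hi ((mem_powersetCard.1 ht).1 h)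
  · intro t ht u hu htu
    have hit : i ∉ t := fun h => hi ((mem_powersetCard.1 ht).1 h)
    have hiu : i ∉ u := fun h => hi ((mem_powersetCard.1 hu).1 h)
    rw [← erase_insert hit, htu, erase_insert hiu]
  · refine disjoint_left.2 fun t ht ht' => ?_
    obtain ⟨u, -, rfl⟩ := mem_image.1 ht'
    exact hi ((mem_powersetCard.1 ht).1 (mem_insert_self i u))

lemma esymmOn_succ_of_mem [DecidableEq ι] {i : ι} (hi : i ∈ s) (k : ℕ) (x : ι → ℝ) :
    esymmOn s (k + 1) x = esymmOn (s.erase i) (k + 1) x + x i * esymmOn (s.erase i) k x := by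
  conv_lhs => rw [← insert_erase hi]
  exact esymmOn_insert (notMem_erase i s) k x

lemma sum_esymmOn_erase [DecidableEq ι] (s : Finset ι) (k : ℕ) (x : ι → ℝ) :
    ∑ i ∈ s, esymmOn (s.erase i) k x = (#s - k : ℝ) * esymmOn s k x := by
  have h_erase : ∀ i ∈ s, esymmOn (s.erase i) k x
      = ∑ t ∈ s.powersetCard k, if i ∉ t then ∏ j ∈ t, x j else 0 := by
    intro i _
    rw [esymmOn, ← sum_filter]
    congr 1
    ext t
    simp only [mem_powersetCard, mem_filter, subset_erase]
    tauto
  rw [sum_congr rfl h_erase, sum_comm, esymmOn, mul_sum]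
  refine sum_congr rfl fun t ht => ?_
  obtain ⟨hts, htk⟩ := mem_powersetCard.1 ht
  rw [sum_ite, sum_const, sum_const_zero, add_zero, ← sdiff_eq_filter,
    card_sdiff_of_subset hts, nsmul_eq_mul, htk, Nat.cast_sub (htk ▸ card_le_card hts)]

lemma sum_mul_esymmOn_erase [DecidableEq ι] (s : Finset ι) (k : ℕ) (x : ι → ℝ) :
    ∑ i ∈ s, x i * esymmOn (s.erase i) k x = (k + 1 : ℝ) * esymmOn s (k + 1) x := by
  have h_split : ∀ i ∈ s, x i * esymmOn (s.erase i) k x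
      = esymmOn s (k + 1) x - esymmOn (s.erase i) (k + 1) x := by
    intro i hi
    rw [esymmOn_succ_of_mem hi k x]
    ring
  rw [sum_congr rfl h_split, sum_sub_distrib, sum_const, sum_esymmOn_erase, nsmul_eq_mul]
  push_cast
  ring

noncomputable def esymmRatio (s : Finset ι) (k : ℕ) (x : ι → ℝ) : ℝ :=
  esymmOn s (k + 1) x / esymmOn s k x

lemma esymmRatio_zero : esymmRatio s 0 x = ∑ i ∈ s, x i := by
  rw [esymmRatio, esymmOn_zero, esymmOn_one, div_one]

lemma esymmRatio_pos (hk : k + 1 ≤ #s) (hx : ∀ i ∈ s, 0 < x i) : 0 < esymmRatio s k x :=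
  div_pos (esymmOn_pos hk hx) (esymmOn_pos (by omega) hx)

lemma esymmRatio_smul (a : ℝ) : esymmRatio s k (a • x) = a * esymmRatio s k x := by
  rw [esymmRatio, esymmRatio, esymmOn_smul, esymmOn_smul]
  rcases eq_or_ne a 0 with rfl | ha
  · simp
  · field_simp
    ring

lemma mul_esymmOn_erase_div_esymmOn [DecidableEq ι] {i : ι} (hi : i ∈ s)
    (hne : esymmOn (s.erase i) k x ≠ 0) :
    x i * esymmOn (s.erase i) (k + 1) x / esymmOn s (k + 1) x
      = parallelSum (x i) (esymmRatio (s.erase i) k x) := by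
  rw [esymmOn_succ_of_mem hi, parallelSum, esymmRatio]
  field_simp
  ring

lemma esymmRatio_succ_eq_sum_parallelSum [DecidableEq ι]
    (hne : ∀ i ∈ s, esymmOn (s.erase i) k x ≠ 0) :
    (k + 2 : ℝ) * esymmRatio s (k + 1) x
      = ∑ i ∈ s, parallelSum (x i) (esymmRatio (s.erase i) k x) := by
  rw [← sum_congr rfl fun i hi => mul_esymmOn_erase_div_esymmOn hi (hne i hi), ← sum_div,
    sum_mul_esymmOn_erase, esymmRatio, mul_div_assoc]
  push_cast
  ring

theorem esymmRatio_add_le {y : ι → ℝ} (hk : k + 1 ≤ #s) (hx : ∀ i ∈ s, 0 < x i)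
    (hy : ∀ i ∈ s, 0 < y i) : esymmRatio s k x + esymmRatio s k y ≤ esymmRatio s k (x + y) := by
  classical
  induction k generalizing s x y with
  | zero =>
    simp only [esymmRatio_zero, Pi.add_apply, sum_add_distrib, le_refl]
  | succ k ih =>
    have hxy : ∀ i ∈ s, 0 < (x + y) i := fun i hi => add_pos (hx i hi) (hy i hi)
    have hk' : ∀ i ∈ s, k + 1 ≤ #(s.erase i) := fun i hi => by
      rw [card_erase_of_mem hi]; omega
    have hne : ∀ {z : ι → ℝ}, (∀ i ∈ s, 0 < z i) → ∀ i ∈ s, esymmOn (s.erase i) k z ≠ 0 :=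
      fun hz i hi => (esymmOn_pos (by have := hk' i hi; omega)
        fun j hj => hz j (mem_of_mem_erase hj)).ne'
    have h_term : ∀ i ∈ s, parallelSum (x i) (esymmRatio (s.erase i) k x)
          + parallelSum (y i) (esymmRatio (s.erase i) k y)
        ≤ parallelSum ((x + y) i) (esymmRatio (s.erase i) k (x + y)) := by
      intro i hi
      have hx' : ∀ j ∈ s.erase i, 0 < x j := fun j hj => hx j (mem_of_mem_erase hj)
      have hy' : ∀ j ∈ s.erase i, 0 < y j := fun j hj => hy j (mem_of_mem_erase hj)
      exact (parallelSum_add_le (hx i hi) (hy i hi) (esymmRatio_pos (hk' i hi) hx')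
        (esymmRatio_pos (hk' i hi) hy')).trans
        (parallelSum_le_parallelSum_right (hxy i hi)
          (add_pos (esymmRatio_pos (hk' i hi) hx') (esymmRatio_pos (hk' i hi) hy'))
          (ih (hk' i hi) hx' hy'))
    have h_sum := sum_le_sum h_term
    rw [sum_add_distrib, ← esymmRatio_succ_eq_sum_parallelSum (hne hx),
      ← esymmRatio_succ_eq_sum_parallelSum (hne hy),
      ← esymmRatio_succ_eq_sum_parallelSum (hne hxy), ← mul_add] at h_sum
    exact le_of_mul_le_mul_left h_sum (by positivity)

lemma convex_setOf_forall_pos : Convex ℝ {x : ι → ℝ | ∀ i, 0 < x i} := by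
  have h : {x : ι → ℝ | ∀ i, 0 < x i} = Set.univ.pi fun _ => Set.Ioi 0 := by
    ext; simp
  exact h ▸ convex_pi fun _ _ => convex_Ioi 0

theorem concaveOn_esymmRatio (hk : k + 1 ≤ #s) :
    ConcaveOn ℝ {x : ι → ℝ | ∀ i, 0 < x i} (esymmRatio s k) := by
  refine concaveOn_iff_forall_pos.2 ⟨convex_setOf_forall_pos, ?_⟩
  intro x hx y hy a b ha hb _
  calc a • esymmRatio s k x + b • esymmRatio s k y
      = esymmRatio s k (a • x) + esymmRatio s k (b • y) := by
        rw [esymmRatio_smul, esymmRatio_smul, smul_eq_mul, smul_eq_mul]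
    _ ≤ esymmRatio s k (a • x + b • y) :=
        esymmRatio_add_le hk (fun i _ => mul_pos ha (hx i)) (fun i _ => mul_pos hb (hy i))

theorem concaveOn_log_esymmOn (hk : k ≤ #s) :
    ConcaveOn ℝ {x : ι → ℝ | ∀ i, 0 < x i} (fun x => Real.log (esymmOn s k x)) := by
  induction k with
  | zero =>
    simpa only [esymmOn_zero, Real.log_one] using concaveOn_const 0 convex_setOf_forall_pos
  | succ k ih =>
    refine ((ih (by omega)).add ((concaveOn_esymmRatio hk).log fun x hx =>
      esymmRatio_pos hk fun i _ => hx i)).congr fun x hx => ?_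
    have hpos : ∀ {j}, j ≤ #s → esymmOn s j x ≠ 0 :=
      fun hj => (esymmOn_pos hj fun i _ => hx i).ne'
    rw [Pi.add_apply, esymmRatio, Real.log_div (hpos hk) (hpos (by omega)), add_sub_cancel]

end EsymmOn

theorem stmt5_general (n k : ℕ) (hkn : k ≤ n) :
    ConcaveOn ℝ (Gamma n) (fun χ => Real.log (esymm n k χ)) :=
  concaveOn_log_esymmOn (s := univ) (by simpa using hkn)

/-- `log σ_k` is concave on the positive orthant `Γ_n`. -/
theorem stmt5 (n k : ℕ) (hk1 : 1 ≤ k) (hkn : k ≤ n) :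
    ConcaveOn ℝ (Gamma n) (fun χ => Real.log (esymm n k χ)) :=
  stmt5_general n k hkn
end

section
/- For χ ∈ Γ_n, 1 ≤ k ≤ n, and g(χ) = log σ_k(χ), the matrix with entries g_{ij} + (g_i/χ_j)δ_{ij} is positive semidefinite, where g_i and g_{ij} denote first and second partial derivatives. -/
open Finset

section

variable {n : ℕ}

lemma pd_finset_sum {ι : Type*} (S : Finset ι) {f : ι → (Fin n → ℝ) → ℝ}
    (hf : ∀ a ∈ S, Differentiable ℝ (f a)) (i : Fin n) :
    pd n (fun x => ∑ a ∈ S, f a x) i = fun x => ∑ a ∈ S, pd n (f a) i x := by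
  funext x
  rw [pd, fderiv_fun_sum fun a ha => (hf a ha) x, _root_.sum_apply]
  rfl

lemma pd_prod (s : Finset (Fin n)) (i : Fin n) :
    pd n (fun x => ∏ j ∈ s, x j) i = fun x => if i ∈ s then ∏ j ∈ s.erase i, x j else 0 := by
  funext x
  simp [pd, hasFDerivAt_finsetProd.fderiv, Pi.single_apply]

lemma pd_sum_prod {ι : Type*} (S : Finset ι) (t : ι → Finset (Fin n)) (i : Fin n) :
    pd n (fun x => ∑ a ∈ S, ∏ j ∈ t a, x j) i =
      fun x => ∑ a ∈ S with i ∈ t a, ∏ j ∈ (t a).erase i, x j := by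
  rw [pd_finset_sum S fun a _ => by fun_prop]
  simp [pd_prod, sum_filter]

lemma pd_log {f : (Fin n → ℝ) → ℝ} {x : Fin n → ℝ} (hf : DifferentiableAt ℝ f x) (hx : f x ≠ 0)
    (i : Fin n) : pd n (fun y => Real.log (f y)) i x = (f x)⁻¹ * pd n f i x := by
  simp [pd, (hf.hasFDerivAt.log hx).fderiv]

lemma pd_pd_log {f : (Fin n → ℝ) → ℝ} {x : Fin n → ℝ} (hf : Differentiable ℝ f) {i : Fin n}
    (hfi : DifferentiableAt ℝ (pd n f i) x) (hx : f x ≠ 0) (j : Fin n) :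
    pd n (pd n (fun y => Real.log (f y)) i) j x =
      (f x)⁻¹ * pd n (pd n f i) j x - (f x ^ 2)⁻¹ * (pd n f i x * pd n f j x) := by
  have hlog : pd n (fun y => Real.log (f y)) i =ᶠ[nhds x] fun y => (f y)⁻¹ * pd n f i y :=
    (hf.continuous.continuousAt.eventually_ne hx).mono fun y hy => pd_log (hf y) hy i
  have hinv : HasFDerivAt (fun y => (f y)⁻¹) (-(f x ^ 2)⁻¹ • fderiv ℝ f x) x :=
    (hasDerivAt_inv hx).comp_hasFDerivAt x (hf x).hasFDerivAt
  rw [pd, hlog.fderiv_eq, (hinv.fun_mul hfi.hasFDerivAt).fderiv]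
  simp only [pd, add_apply, smul_apply, smul_eq_mul]
  ring

lemma sum_sum_filter_mem {ι : Type*} (S : Finset ι) (t : ι → Finset (Fin n))
    (F : ι → Fin n → ℝ) : ∑ i, ∑ a ∈ S with i ∈ t a, F a i = ∑ a ∈ S, ∑ i ∈ t a, F a i :=
  sum_comm' fun i a => by simp [and_comm]

lemma prod_erase_mul_eq_prod_mul_div {s : Finset (Fin n)} {x : Fin n → ℝ} {i : Fin n}
    (hi : i ∈ s) (hx : x i ≠ 0) (c : ℝ) :
    (∏ j ∈ s.erase i, x j) * c = (∏ j ∈ s, x j) * (c / x i) := by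
  rw [← prod_erase_mul s x hi]
  field_simp

lemma sum_pd_sum_prod_mul {ι : Type*} (S : Finset ι) (t : ι → Finset (Fin n)) {x : Fin n → ℝ}
    (hx : ∀ i, x i ≠ 0) (v : Fin n → ℝ) :
    ∑ i, pd n (fun x => ∑ a ∈ S, ∏ j ∈ t a, x j) i x * v i =
      ∑ a ∈ S, (∏ j ∈ t a, x j) * ∑ i ∈ t a, v i / x i := by
  simp only [pd_sum_prod, sum_mul, sum_sum_filter_mem S t, mul_sum]
  refine sum_congr rfl fun a _ => sum_congr rfl fun i hi => ?_
  exact prod_erase_mul_eq_prod_mul_div hi (hx i) (v i)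

lemma sum_prod_erase_erase_mul_add {s : Finset (Fin n)} {x : Fin n → ℝ} (hx : ∀ i, x i ≠ 0)
    (v : Fin n → ℝ) :
    ∑ i ∈ s, ∑ j ∈ s.erase i, (∏ l ∈ (s.erase i).erase j, x l) * v i * v j
        + ∑ i ∈ s, (∏ l ∈ s.erase i, x l) * v i ^ 2 / x i =
      (∏ l ∈ s, x l) * (∑ i ∈ s, v i / x i) ^ 2 := by
  rw [sq, sum_mul_sum, mul_sum, ← sum_add_distrib]
  refine sum_congr rfl fun i hi => ?_
  rw [mul_sum, ← sum_erase_add s _ hi]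
  congr 1
  · refine sum_congr rfl fun j hj => ?_
    rw [mul_assoc, prod_erase_mul_eq_prod_mul_div hj (hx j),
      prod_erase_mul_eq_prod_mul_div hi (hx i)]
    ring
  · rw [mul_div_assoc, prod_erase_mul_eq_prod_mul_div hi (hx i)]
    ring

lemma sum_pd_pd_sum_prod_mul_add {ι : Type*} (S : Finset ι) (t : ι → Finset (Fin n))
    {x : Fin n → ℝ} (hx : ∀ i, x i ≠ 0) (v : Fin n → ℝ) :
    ∑ i, ∑ j, pd n (pd n (fun x => ∑ a ∈ S, ∏ j ∈ t a, x j) i) j x * v i * v j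
        + ∑ i, pd n (fun x => ∑ a ∈ S, ∏ j ∈ t a, x j) i x * v i ^ 2 / x i =
      ∑ a ∈ S, (∏ j ∈ t a, x j) * (∑ i ∈ t a, v i / x i) ^ 2 := by
  simp only [pd_sum_prod, sum_mul, sum_div, sum_sum_filter_mem]
  rw [← sum_add_distrib]
  exact sum_congr rfl fun a _ => sum_prod_erase_erase_mul_add hx v

lemma sum_pd_pd_add_pd_div_mul_eq (g : (Fin n → ℝ) → ℝ) (x v : Fin n → ℝ) :
    ∑ i, ∑ j, (pd n (pd n g i) j x + (pd n g i x / x j) * (if i = j then 1 else 0)) * v i * v j =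
      ∑ i, ∑ j, pd n (pd n g i) j x * v i * v j + ∑ i, pd n g i x * v i ^ 2 / x i := by
  simp only [add_mul, sum_add_distrib, mul_ite, mul_one, mul_zero, ite_mul, zero_mul,
    sum_ite_eq, mem_univ, if_true]
  congr 1
  refine sum_congr rfl fun i _ => ?_
  ring

lemma sum_pd_pd_log_mul_add {f : (Fin n → ℝ) → ℝ} (hf : Differentiable ℝ f)
    {x : Fin n → ℝ} (hfi : ∀ i, DifferentiableAt ℝ (pd n f i) x) (hx : f x ≠ 0) (v : Fin n → ℝ) :
    ∑ i, ∑ j, pd n (pd n (fun y => Real.log (f y)) i) j x * v i * v j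
        + ∑ i, pd n (fun y => Real.log (f y)) i x * v i ^ 2 / x i =
      (f x)⁻¹ * (∑ i, ∑ j, pd n (pd n f i) j x * v i * v j + ∑ i, pd n f i x * v i ^ 2 / x i)
        - (f x ^ 2)⁻¹ * (∑ i, pd n f i x * v i) ^ 2 := by
  have hB : (∑ i, pd n f i x * v i) ^ 2 = ∑ i, ∑ j, pd n f i x * pd n f j x * v i * v j := by
    rw [sq, sum_mul_sum]
    exact sum_congr rfl fun i _ => sum_congr rfl fun j _ => by ring
  simp only [pd_pd_log hf (hfi _) hx, pd_log (hf x) hx, hB, mul_add, mul_sum, sub_mul,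
    sum_sub_distrib]
  rw [sub_add_eq_add_sub]
  congr 1
  · congr 1
    · exact sum_congr rfl fun i _ => sum_congr rfl fun j _ => by ring
    · exact sum_congr rfl fun i _ => by ring
  · exact sum_congr rfl fun i _ => sum_congr rfl fun j _ => by ring

theorem sum_pd_pd_log_sum_prod_nonneg {ι : Type*} {S : Finset ι} (hS : S.Nonempty)
    (t : ι → Finset (Fin n)) {g : (Fin n → ℝ) → ℝ}
    (hg : g = fun y => Real.log (∑ a ∈ S, ∏ j ∈ t a, y j)) {x : Fin n → ℝ} (hx : ∀ i, 0 < x i)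
    (v : Fin n → ℝ) :
    0 ≤ ∑ i, ∑ j, (pd n (pd n g i) j x + (pd n g i x / x j) * (if i = j then 1 else 0)) *
      v i * v j := by
  set F := fun y : Fin n → ℝ => ∑ a ∈ S, ∏ j ∈ t a, y j with hF_def
  have hx0 : ∀ i, x i ≠ 0 := fun i => (hx i).ne'
  have hF : Differentiable ℝ F := by fun_prop
  have hFi : ∀ i, DifferentiableAt ℝ (pd n F i) x := fun i => by
    rw [hF_def, pd_sum_prod]; fun_prop
  have hFx : 0 < F x := sum_pos (fun a _ => prod_pos fun j _ => hx j) hS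
  have hm : ∀ a ∈ S, 0 ≤ ∏ j ∈ t a, x j := fun a _ => prod_nonneg fun j _ => (hx j).le
  have cauchy_schwarz : (∑ a ∈ S, (∏ j ∈ t a, x j) * ∑ i ∈ t a, v i / x i) ^ 2 ≤
      F x * ∑ a ∈ S, (∏ j ∈ t a, x j) * (∑ i ∈ t a, v i / x i) ^ 2 :=
    sum_sq_le_sum_mul_sum_of_sq_le_mul S hm (fun a ha => mul_nonneg (hm a ha) (sq_nonneg _))
      fun a _ => by rw [mul_pow, sq, mul_assoc]
  rw [hg, sum_pd_pd_add_pd_div_mul_eq, sum_pd_pd_log_mul_add hF hFi hFx.ne', hF_def,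
    sum_pd_pd_sum_prod_mul_add S t hx0, sum_pd_sum_prod_mul S t hx0, sub_nonneg]
  calc (F x ^ 2)⁻¹ * _ ≤ (F x ^ 2)⁻¹ * (F x * _) := by gcongr
    _ = (F x)⁻¹ * _ := by field_simp

end

theorem stmt6_general (n k : ℕ) (hkn : k ≤ n)
    (g : (Fin n → ℝ) → ℝ) (hg : g = fun χ => Real.log (esymm n k χ)) :
    ∀ χ ∈ Gamma n, ∀ v : Fin n → ℝ,
      0 ≤ ∑ i : Fin n, ∑ j : Fin n,
        (pd n (pd n g i) j χ + (pd n g i χ / χ j) * (if i = j then 1 else 0))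
          * v i * v j := by
  intro χ hχ v
  have hS : (univ.powersetCard k : Finset (Finset (Fin n))).Nonempty :=
    powersetCard_nonempty.2 (by simpa using hkn)
  exact sum_pd_pd_log_sum_prod_nonneg hS id hg hχ v

/-- For `g(χ) = log σ_k(χ)` on `Γ_n`, the matrix with entries
`g_{ij} + (g_i/χ_j)δ_{ij}` is positive semidefinite. -/
theorem stmt6 (n k : ℕ) (hk1 : 1 ≤ k) (hkn : k ≤ n)
    (g : (Fin n → ℝ) → ℝ) (hg : g = fun χ => Real.log (esymm n k χ)) :
    ∀ χ ∈ Gamma n, ∀ v : Fin n → ℝ,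
      0 ≤ ∑ i : Fin n, ∑ j : Fin n,
        (pd n (pd n g i) j χ + (pd n g i χ / χ j) * (if i = j then 1 else 0))
          * v i * v j :=
  stmt6_general n k hkn g hg
end

section
/- Let h(χ) = -log σ_k(χ^{-1}) on the positive orthant Γ_n. Then h is concave on Γ_n. -/
/-!
Writing `σ_k(χ⁻¹) = ∑_{|s| = k} ∏_{i ∈ s} χ_i⁻¹`, each summand is log-convex on `Γ_n`, since its
logarithm `∑_{i ∈ s} -log χ_i` is convex. A finite sum of log-convex functions is log-convex
(Hölder's inequality with exponents `1/a`, `1/b`), so `log σ_k(χ⁻¹)` is convex and `h` is concave.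
-/

open Finset

lemma Real.sum_rpow_mul_rpow_le {ι : Type*} (s : Finset ι) {f g : ι → ℝ}
    (hf : ∀ i ∈ s, 0 ≤ f i) (hg : ∀ i ∈ s, 0 ≤ g i) {a b : ℝ} (ha : 0 < a) (hb : 0 < b)
    (hab : a + b = 1) :
    ∑ i ∈ s, f i ^ a * g i ^ b ≤ (∑ i ∈ s, f i) ^ a * (∑ i ∈ s, g i) ^ b := by
  have holder := Real.inner_le_Lp_mul_Lq_of_nonneg s (.inv_inv ha hb hab)
    (fun i hi => Real.rpow_nonneg (hf i hi) a) (fun i hi => Real.rpow_nonneg (hg i hi) b)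
  rwa [one_div, inv_inv, one_div, inv_inv,
    sum_congr rfl fun i hi => Real.rpow_rpow_inv (hf i hi) ha.ne',
    sum_congr rfl fun i hi => Real.rpow_rpow_inv (hg i hi) hb.ne'] at holder

section LogConvex

variable {E : Type*} [AddCommGroup E] [Module ℝ E] {S : Set E}

lemma ConvexOn.finset_sum {ι : Type*} (t : Finset ι) (hS : Convex ℝ S) {f : ι → E → ℝ}
    (hf : ∀ i ∈ t, ConvexOn ℝ S (f i)) : ConvexOn ℝ S (fun x => ∑ i ∈ t, f i x) := by
  classical
  induction t using Finset.induction_on with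
  | empty => simpa using convexOn_const 0 hS
  | insert a t ha ih =>
    simp only [sum_insert ha]
    exact (hf a (mem_insert_self a t)).add (ih fun i hi => hf i (mem_insert_of_mem hi))

lemma ConvexOn.le_rpow_mul_rpow_of_log {f : E → ℝ} (hf : ConvexOn ℝ S (fun x => Real.log (f x)))
    (hpos : ∀ x ∈ S, 0 < f x) {x y : E} (hx : x ∈ S) (hy : y ∈ S) {a b : ℝ} (ha : 0 ≤ a)
    (hb : 0 ≤ b) (hab : a + b = 1) : f (a • x + b • y) ≤ f x ^ a * f y ^ b := by
  rw [Real.rpow_def_of_pos (hpos x hx), Real.rpow_def_of_pos (hpos y hy), ← Real.exp_add,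
    ← Real.exp_log (hpos _ (hf.1 hx hy ha hb hab))]
  refine Real.exp_le_exp.2 ((hf.2 hx hy ha hb hab).trans_eq ?_)
  simp only [smul_eq_mul]
  ring

lemma ConvexOn.log_sum {ι : Type*} {t : Finset ι} (ht : t.Nonempty) {f : ι → E → ℝ}
    (hpos : ∀ i ∈ t, ∀ x ∈ S, 0 < f i x)
    (hf : ∀ i ∈ t, ConvexOn ℝ S (fun x => Real.log (f i x))) :
    ConvexOn ℝ S (fun x => Real.log (∑ i ∈ t, f i x)) := by
  obtain ⟨i₀, hi₀⟩ := ht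
  have hS : Convex ℝ S := (hf i₀ hi₀).1
  have hsum_pos : ∀ x ∈ S, 0 < ∑ i ∈ t, f i x := fun x hx =>
    sum_pos (fun i hi => hpos i hi x hx) ⟨i₀, hi₀⟩
  refine ⟨hS, fun x hx y hy a b ha hb hab => ?_⟩
  rcases ha.eq_or_lt with rfl | ha
  · simp [(zero_add b).symm.trans hab]
  rcases hb.eq_or_lt with rfl | hb
  · simp [(add_zero a).symm.trans hab]
  have hmul : ∑ i ∈ t, f i (a • x + b • y) ≤
      (∑ i ∈ t, f i x) ^ a * (∑ i ∈ t, f i y) ^ b :=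
    (sum_le_sum fun i hi =>
        (hf i hi).le_rpow_mul_rpow_of_log (hpos i hi) hx hy ha.le hb.le hab).trans
      (Real.sum_rpow_mul_rpow_le t (fun i hi => (hpos i hi x hx).le)
        (fun i hi => (hpos i hi y hy).le) ha hb hab)
  calc Real.log (∑ i ∈ t, f i (a • x + b • y))
      ≤ Real.log ((∑ i ∈ t, f i x) ^ a * (∑ i ∈ t, f i y) ^ b) :=
        Real.log_le_log (hsum_pos _ (hS hx hy ha.le hb.le hab)) hmul
    _ = a • Real.log (∑ i ∈ t, f i x) + b • Real.log (∑ i ∈ t, f i y) := by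
        rw [Real.log_mul (Real.rpow_pos_of_pos (hsum_pos x hx) a).ne'
          (Real.rpow_pos_of_pos (hsum_pos y hy) b).ne', Real.log_rpow (hsum_pos x hx),
          Real.log_rpow (hsum_pos y hy), smul_eq_mul, smul_eq_mul]

end LogConvex

lemma convex_Gamma (n : ℕ) : Convex ℝ (Gamma n) := by
  have hpi : Gamma n = Set.univ.pi fun _ => Set.Ioi 0 := by ext; simp [Gamma]
  exact hpi ▸ convex_pi fun _ _ => convex_Ioi 0

lemma convexOn_neg_log_apply (n : ℕ) (i : Fin n) :
    ConvexOn ℝ (Gamma n) (fun χ => -Real.log (χ i)) :=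
  (strictConcaveOn_log_Ioi.concaveOn.neg.comp_linearMap
    (LinearMap.proj (R := ℝ) (φ := fun _ : Fin n => ℝ) i)).subset
    (fun _ (hχ : _ ∈ Gamma n) => hχ i) (convex_Gamma n)

lemma convexOn_log_prod_inv (n : ℕ) (s : Finset (Fin n)) :
    ConvexOn ℝ (Gamma n) (fun χ => Real.log (∏ i ∈ s, (χ i)⁻¹)) := by
  refine (ConvexOn.finset_sum s (convex_Gamma n) fun i _ => convexOn_neg_log_apply n i).congr
    fun χ hχ => ?_
  rw [Real.log_prod fun i _ => inv_ne_zero (hχ i).ne']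
  simp only [Real.log_inv]

theorem stmt9_general (n k : ℕ) (hkn : k ≤ n) :
    ConcaveOn ℝ (Gamma n)
      (fun χ => -Real.log (esymm n k (fun i => (χ i)⁻¹))) := by
  have hnonempty : (univ.powersetCard k : Finset (Finset (Fin n))).Nonempty :=
    powersetCard_nonempty.2 (by simpa using hkn)
  refine (ConvexOn.log_sum hnonempty (fun s _ χ hχ => ?_)
    fun s _ => convexOn_log_prod_inv n s).neg
  exact prod_pos fun i _ => inv_pos.2 (hχ i)

/-- `h(χ) = -log σ_k(χ⁻¹)` is concave on the positive orthant `Γ_n`. -/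
theorem stmt9 (n k : ℕ) (hk1 : 1 ≤ k) (hkn : k ≤ n) :
    ConcaveOn ℝ (Gamma n)
      (fun χ => -Real.log (esymm n k (fun i => (χ i)⁻¹))) :=
  stmt9_general n k hkn
end

section
/- Let f : ℝ_{>0} → ℝ be smooth with f' < 0, f'' ≥ 0, and f'' + f'/x ≤ 0 on ℝ_{>0}. Then ρ(χ) = f(σ_k(χ^{-1})) satisfies the strong concavity property: the matrix with entries ρ_{ij} + (ρ_i/χ_j)δ_{ij} is negative semidefinite on Γ_n. -/
open Finset

/-- Expansion of a continuous linear functional on `Fin n → ℝ` in coordinates. -/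
theorem clm_expand (n : ℕ) (T : (Fin n → ℝ) →L[ℝ] ℝ) (u : Fin n → ℝ) :
    T u = ∑ i, u i * T (Pi.single i 1) := by
  conv_lhs => rw [← Finset.univ_sum_single u]
  rw [map_sum]
  refine Finset.sum_congr rfl fun i _ => ?_
  have h : Pi.single (M := fun _ : Fin n => ℝ) i (u i) = u i • (Pi.single i 1 : Fin n → ℝ) := by
    funext j
    by_cases hj : j = i
    · subst hj; simp
    · simp [Pi.single_eq_of_ne hj]
  rw [h, map_smul, smul_eq_mul]

set_option maxHeartbeats 1000000 in
/-- Strong concavity: if `f' < 0`, `f'' ≥ 0` and `f'' + f'/x ≤ 0` on `ℝ_{>0}`,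
then for `ρ(χ) = f(σ_k(χ⁻¹))` the matrix with entries
`ρ_{ij} + (ρ_i/χ_j)δ_{ij}` is negative semidefinite on `Γ_n`. -/
theorem stmt12 (n k : ℕ) (hn : 1 ≤ n) (hk1 : 1 ≤ k) (hkn : k ≤ n)
    (f : ℝ → ℝ) (hf : ContDiffOn ℝ (⊤ : ℕ∞) f (Set.Ioi 0))
    (hf1 : ∀ x : ℝ, 0 < x → deriv f x < 0)
    (hf2 : ∀ x : ℝ, 0 < x → 0 ≤ deriv (deriv f) x)
    (hf3 : ∀ x : ℝ, 0 < x → deriv (deriv f) x + deriv f x / x ≤ 0)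
    (ρ : (Fin n → ℝ) → ℝ)
    (hρ : ρ = fun χ => f (esymm n k (fun i => (χ i)⁻¹))) :
    ∀ χ ∈ Gamma n, ∀ v : Fin n → ℝ,
      ∑ i : Fin n, ∑ j : Fin n,
        (pd n (pd n ρ i) j χ + (pd n ρ i χ / χ j) * (if i = j then 1 else 0))
          * v i * v j ≤ 0 := by
  intro χ hχ v
  have hχp : ∀ i, 0 < χ i := hχ
  -- smoothness of ρ on the positive orthant
  have hρC : ∀ x, x ∈ Gamma n → ContDiffAt ℝ (⊤ : ℕ∞) ρ x := by
    intro x hx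
    have hσ : ContDiffAt ℝ (⊤ : ℕ∞) (fun y : Fin n → ℝ => esymm n k fun i => (y i)⁻¹) x := by
      simp only [esymm]
      apply ContDiffAt.sum
      intro S _
      exact contDiffAt_prod fun i _ =>
        ((contDiff_apply ℝ ℝ i).contDiffAt).inv (ne_of_gt (hx i))
    have hpos : (0:ℝ) < esymm n k fun i => (x i)⁻¹ := by
      unfold esymm
      refine Finset.sum_pos (fun S _ => Finset.prod_pos fun i _ => inv_pos.2 (hx i)) ?_
      refine Finset.powersetCard_nonempty.2 ?_
      simpa using hkn
    rw [hρ]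
    exact (hf.contDiffAt (Ioi_mem_nhds hpos)).comp x hσ
  have hρdiff : ∀ x, x ∈ Gamma n → DifferentiableAt ℝ ρ x :=
    fun x hx => (hρC x hx).differentiableAt (by simp)
  -- second derivative data at χ
  have hFd : DifferentiableAt ℝ (fderiv ℝ ρ) χ :=
    ((hρC χ hχ).fderiv_right (m := 1) (by exact WithTop.coe_le_coe.mpr le_top)).differentiableAt one_ne_zero
  set F2 := fderiv ℝ (fderiv ℝ ρ) χ with hF2def
  have hF2d : HasFDerivAt (fderiv ℝ ρ) F2 χ := hFd.hasFDerivAt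
  -- the curve
  set a : Fin n → ℝ := fun i => v i / χ i with ha
  set w : Fin n → ℝ := fun i => v i * a i with hw
  set γ : ℝ → Fin n → ℝ := fun t i => χ i * Real.exp (t * a i) with hγ
  set γ1 : ℝ → Fin n → ℝ := fun t i => v i * Real.exp (t * a i) with hγ1
  have hγ0 : γ 0 = χ := by funext i; simp [hγ]
  have hγ10 : γ1 0 = v := by funext i; simp [hγ1]
  have hγmem : ∀ t, γ t ∈ Gamma n := fun t i => mul_pos (hχp i) (Real.exp_pos _)
  have hχa : ∀ i, χ i * a i = v i := by
    intro i
    simp only [ha]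
    field_simp
    exact mul_div_cancel_left₀ _ (ne_of_gt (hχp i))
  have hγd : ∀ t, HasDerivAt γ (γ1 t) t := by
    intro t
    rw [hasDerivAt_pi]
    intro i
    simp only [hγ, hγ1]
    have h1 : HasDerivAt (fun s : ℝ => χ i * Real.exp (s * a i))
        (χ i * (Real.exp (t * a i) * a i)) t :=
      ((hasDerivAt_mul_const (a i)).exp).const_mul (χ i)
    have h2 : χ i * (Real.exp (t * a i) * a i) = v i * Real.exp (t * a i) := by
      rw [← hχa i]; ring
    rw [← h2]
    exact h1
  have hγ1d : HasDerivAt γ1 w 0 := by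
    rw [hasDerivAt_pi]
    intro i
    simp only [hγ1, hw]
    have h1 : HasDerivAt (fun s : ℝ => v i * Real.exp (s * a i))
        (v i * (Real.exp (0 * a i) * a i)) 0 :=
      ((hasDerivAt_mul_const (a i)).exp).const_mul (v i)
    have h2 : v i * (Real.exp (0 * a i) * a i) = v i * a i := by
      simp
    rw [← h2]
    exact h1
  -- one-variable model
  set P : Finset (Finset (Fin n)) := Finset.univ.powersetCard k with hPdef
  set c : Finset (Fin n) → ℝ := fun S => ∏ i ∈ S, (χ i)⁻¹ with hc
  set L : Finset (Fin n) → ℝ := fun S => ∑ i ∈ S, a i with hL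
  have hcpos : ∀ S, 0 < c S := fun S => Finset.prod_pos fun i _ => inv_pos.2 (hχp i)
  have hPne : P.Nonempty := by
    refine Finset.powersetCard_nonempty.2 ?_
    simpa using hkn
  set g : ℝ → ℝ := fun t => ∑ S ∈ P, c S * Real.exp (-(t * L S)) with hg
  set g1 : ℝ → ℝ := fun t => ∑ S ∈ P, c S * (Real.exp (-(t * L S)) * -L S) with hg1
  have hgd : ∀ t, HasDerivAt g (g1 t) t := by
    intro t
    simp only [hg, hg1]
    apply HasDerivAt.fun_sum
    intro S _
    exact (((hasDerivAt_mul_const (L S)).neg).exp).const_mul (c S)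
  have hgpos : ∀ t, 0 < g t := by
    intro t
    simp only [hg]
    exact Finset.sum_pos (fun S _ => mul_pos (hcpos S) (Real.exp_pos _)) hPne
  have hg0 : g 0 = ∑ S ∈ P, c S := by
    simp [hg]
  -- ρ ∘ γ = f ∘ g
  have hcomp : ∀ t, ρ (γ t) = f (g t) := by
    intro t
    simp only [hρ, hg]
    congr 1
    simp only [esymm]
    rw [← hPdef]
    refine Finset.sum_congr rfl fun S hS => ?_
    have h1 : ∀ i ∈ S, (γ t i)⁻¹ = (χ i)⁻¹ * Real.exp (-(t * a i)) := by
      intro i _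
      simp only [hγ]
      rw [mul_inv, ← Real.exp_neg]
    rw [Finset.prod_congr rfl h1, Finset.prod_mul_distrib, ← Real.exp_sum]
    have h2 : ∑ i ∈ S, -(t * a i) = -(t * L S) := by
      simp only [hL]
      rw [Finset.mul_sum]
      exact Finset.sum_neg_distrib _
    rw [h2]
  -- derivatives of h := ρ ∘ γ computed in two ways
  have hfd : ∀ x : ℝ, 0 < x → HasDerivAt f (deriv f x) x := fun x hx =>
    ((hf.differentiableOn (by simp)).differentiableAt (Ioi_mem_nhds hx)).hasDerivAt
  have hhψ : ∀ t, HasDerivAt (fun s => ρ (γ s))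
      (deriv f (g t) * g1 t) t := by
    intro t
    have heq : (fun s => ρ (γ s)) = fun s => f (g s) := funext hcomp
    rw [heq]
    exact (hfd (g t) (hgpos t)).comp t (hgd t)
  have hhφ : ∀ t, HasDerivAt (fun s => ρ (γ s))
      ((fderiv ℝ ρ (γ t)) (γ1 t)) t := fun t =>
    ((hρdiff (γ t) (hγmem t)).hasFDerivAt).comp_hasDerivAt t (hγd t)
  have hφψ : (fun t => (fderiv ℝ ρ (γ t)) (γ1 t)) =
      (fun t => deriv f (g t) * g1 t) :=
    funext fun t => (hhφ t).unique (hhψ t)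
  -- derivative of φ at 0
  have hcurve : HasDerivAt (fun t => (fderiv ℝ ρ (γ t)) (γ1 t))
      (F2 v v + fderiv ℝ ρ χ w) 0 := by
    have hcc : HasDerivAt (fun t => fderiv ℝ ρ (γ t)) (F2 v) 0 := by
      have h1 : HasFDerivAt (fderiv ℝ ρ) F2 (γ 0) := by rw [hγ0]; exact hF2d
      have h2 := h1.comp_hasDerivAt 0 (hγd 0)
      rw [hγ10] at h2
      exact h2
    have h3 := hcc.clm_apply hγ1d
    rw [hγ0, hγ10] at h3
    exact h3
  -- derivative of ψ at 0
  set D : ℝ := ∑ S ∈ P, c S * (Real.exp (-(0 * L S)) * -L S * -L S) with hD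
  have hg1d : HasDerivAt g1 D 0 := by
    simp only [hg1, hD]
    apply HasDerivAt.fun_sum
    intro S _
    exact ((((hasDerivAt_mul_const (L S)).neg).exp).mul_const (-L S)).const_mul (c S)
  have hud : HasDerivAt (fun t => deriv f (g t))
      (deriv (deriv f) (g 0) * g1 0) 0 := by
    have hfd2 : HasDerivAt (deriv f) (deriv (deriv f) (g 0)) (g 0) :=
      (((hf.deriv_of_isOpen isOpen_Ioi (m := 1) (by exact WithTop.coe_le_coe.mpr le_top)).differentiableOn one_ne_zero).differentiableAt
        (Ioi_mem_nhds (hgpos 0))).hasDerivAt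
    exact hfd2.comp 0 (hgd 0)
  have hψd : HasDerivAt (fun t => deriv f (g t) * g1 t)
      (deriv (deriv f) (g 0) * g1 0 * g1 0 + deriv f (g 0) * D) 0 :=
    hud.mul hg1d
  have hEq : F2 v v + fderiv ℝ ρ χ w =
      deriv (deriv f) (g 0) * g1 0 * g1 0 + deriv f (g 0) * D := by
    have h := hcurve
    rw [hφψ] at h
    exact h.unique hψd
  -- identify the quadratic form with the curve second derivative
  have hpd2 : ∀ i j : Fin n, pd n (pd n ρ i) j χ =
      F2 (Pi.single j 1) (Pi.single i 1) := by
    intro i j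
    have h1 : HasFDerivAt (fun x => fderiv ℝ ρ x (Pi.single i 1))
        ((fderiv ℝ ρ χ).comp (0 : (Fin n → ℝ) →L[ℝ] (Fin n → ℝ)) +
          F2.flip (Pi.single i 1)) χ :=
      hF2d.clm_apply (hasFDerivAt_const _ _)
    have h2 := h1.fderiv
    have h3 : pd n ρ i = fun x => fderiv ℝ ρ x (Pi.single i 1) := rfl
    show fderiv ℝ (pd n ρ i) χ (Pi.single j 1) = _
    rw [h3, h2]
    simp
  have hsum : ∑ i : Fin n, ∑ j : Fin n,
      (pd n (pd n ρ i) j χ + (pd n ρ i χ / χ j) * (if i = j then 1 else 0))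
        * v i * v j = F2 v v + fderiv ℝ ρ χ w := by
    have e1 : F2 v v = ∑ i, ∑ j, F2 (Pi.single j 1) (Pi.single i 1) * v i * v j := by
      rw [clm_expand n (F2 v) v]
      refine Finset.sum_congr rfl fun i _ => ?_
      have h4 : F2 v (Pi.single i 1) = (F2.flip (Pi.single i 1)) v :=
        (ContinuousLinearMap.flip_apply F2 v (Pi.single i 1)).symm
      rw [h4, clm_expand n (F2.flip (Pi.single i 1)) v, Finset.mul_sum]
      refine Finset.sum_congr rfl fun j _ => ?_
      rw [ContinuousLinearMap.flip_apply]; ring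
    have e2 : fderiv ℝ ρ χ w = ∑ i, ∑ j,
        (pd n ρ i χ / χ j) * (if i = j then 1 else 0) * v i * v j := by
      rw [clm_expand n (fderiv ℝ ρ χ) w]
      refine Finset.sum_congr rfl fun i _ => ?_
      rw [Finset.sum_eq_single i]
      · have : pd n ρ i χ = fderiv ℝ ρ χ (Pi.single i 1) := rfl
        rw [if_pos rfl, this]
        simp only [hw, ha]
        ring
      · intro j _ hj
        rw [if_neg (Ne.symm hj)]
        ring
      · intro h; exact absurd (Finset.mem_univ i) h
    rw [e1, e2, ← Finset.sum_add_distrib]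
    refine Finset.sum_congr rfl fun i _ => ?_
    rw [← Finset.sum_add_distrib]
    refine Finset.sum_congr rfl fun j _ => ?_
    rw [hpd2 i j]
    ring
  rw [hsum, hEq]
  -- final inequality
  have hX : g1 0 = -∑ S ∈ P, c S * L S := by
    simp [hg1, mul_neg, Finset.sum_neg_distrib]
  have hDval : D = ∑ S ∈ P, c S * (L S * L S) := by
    simp [hD, neg_mul_neg]
  have hY : (0:ℝ) ≤ ∑ S ∈ P, c S * (L S * L S) :=
    Finset.sum_nonneg fun S _ => mul_nonneg (le_of_lt (hcpos S)) (mul_self_nonneg _)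
  have hCS : (∑ S ∈ P, c S * L S) ^ 2 ≤
      (∑ S ∈ P, c S) * ∑ S ∈ P, c S * (L S * L S) := by
    have h := Finset.sum_mul_sq_le_sq_mul_sq P (fun S => Real.sqrt (c S))
      (fun S => Real.sqrt (c S) * L S)
    have e1 : ∀ S ∈ P, Real.sqrt (c S) * (Real.sqrt (c S) * L S) = c S * L S := by
      intro S _
      rw [← mul_assoc, Real.mul_self_sqrt (le_of_lt (hcpos S))]
    have e2 : ∀ S ∈ P, Real.sqrt (c S) ^ 2 = c S := by
      intro S _; exact Real.sq_sqrt (le_of_lt (hcpos S))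
    have e3 : ∀ S ∈ P, (Real.sqrt (c S) * L S) ^ 2 = c S * (L S * L S) := by
      intro S _
      rw [mul_pow, Real.sq_sqrt (le_of_lt (hcpos S))]
      ring
    rw [Finset.sum_congr rfl e1, Finset.sum_congr rfl e2, Finset.sum_congr rfl e3] at h
    exact h
  have hA : 0 < g 0 := hgpos 0
  have hfp : deriv f (g 0) < 0 := hf1 _ hA
  have hfpp : 0 ≤ deriv (deriv f) (g 0) := hf2 _ hA
  have hf3' : deriv (deriv f) (g 0) + deriv f (g 0) / g 0 ≤ 0 := hf3 _ hA
  have hkey : deriv f (g 0) / g 0 * g 0 = deriv f (g 0) :=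
    div_mul_cancel₀ _ (ne_of_gt hA)
  have h5 : deriv (deriv f) (g 0) * g 0 ≤ -deriv f (g 0) := by
    nlinarith [hf3', hA, hkey]
  have hXX : g1 0 * g1 0 ≤ g 0 * ∑ S ∈ P, c S * (L S * L S) := by
    rw [hX, hg0]
    nlinarith [hCS]
  rw [hDval]
  nlinarith [mul_le_mul_of_nonneg_left hXX hfpp,
    mul_le_mul_of_nonneg_right h5 hY, hA, hY, hfpp,
    mul_nonneg hfpp hY]
end

section
/- Suppose f : ℝ_{>0} → ℝ is differentiable with f(1) = 0 and f''(x) + f'(x)/x ≤ 0 wherever f is twice differentiable, and f' < 0. Then for all x > 0 and any integer k ≥ 1: f(x) + k·f'(x)·x - k·f'(x)·x^{1+1/k} ≥ 0. -/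
/-!
The hypothesis `f'' + f'/x ≤ 0` says exactly that `g(s) = s f'(s)` is antitone. Hence
`F(s) = f(s) - g(x) log s` has derivative `(g(s) - g(x)) / s`, which is `≥ 0` left of `x` and
`≤ 0` right of it, so `F(1) ≤ F(x)`, i.e. `x f'(x) log x ≤ f(x)`. Since `x f'(x) < 0`, the bound
`log x ≤ k (x^{1/k} - 1)` (from `log t ≤ t - 1` at `t = x^{1/k}`) finishes the proof.
-/

open Real Set

theorem log_le_mul_rpow_inv_sub_one {x r : ℝ} (hx : 0 < x) (hr : 0 < r) :
    log x ≤ r * (x ^ r⁻¹ - 1) := by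
  have h := log_le_sub_one_of_pos (rpow_pos_of_pos hx r⁻¹)
  rw [log_rpow hx] at h
  calc log x = r * (r⁻¹ * log x) := by field_simp
    _ ≤ r * (x ^ r⁻¹ - 1) := by gcongr

theorem isMaxOn_Ioi_of_deriv_nonneg_of_deriv_nonpos {F : ℝ → ℝ} {a x : ℝ} (hx : a < x)
    (hF : DifferentiableOn ℝ F (Ioi a)) (hleft : ∀ s ∈ Ioo a x, 0 ≤ deriv F s)
    (hright : ∀ s ∈ Ioi x, deriv F s ≤ 0) : IsMaxOn F (Ioi a) x := by
  intro y (hy : a < y)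
  rcases le_total y x with hyx | hxy
  · have hmono : MonotoneOn F (Ioc a x) :=
      monotoneOn_of_deriv_nonneg (convex_Ioc a x) (hF.continuousOn.mono Ioc_subset_Ioi_self)
        (hF.mono (by simpa using Ioo_subset_Ioi_self)) (by simpa using hleft)
    exact hmono ⟨hy, hyx⟩ ⟨hx, le_rfl⟩ hyx
  · have hanti : AntitoneOn F (Ici x) :=
      antitoneOn_of_deriv_nonpos (convex_Ici x) (hF.continuousOn.mono (Ici_subset_Ioi.2 hx))
        (hF.mono (by simpa using Ioi_subset_Ioi hx.le)) (by simpa using hright)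
    exact hanti (mem_Ici.2 le_rfl) hxy hxy

theorem antitoneOn_mul_deriv {f : ℝ → ℝ} (hdiff' : DifferentiableOn ℝ (deriv f) (Ioi 0))
    (hf'' : ∀ x : ℝ, 0 < x → deriv (deriv f) x + deriv f x / x ≤ 0) :
    AntitoneOn (fun s => s * deriv f s) (Ioi 0) := by
  have hd : DifferentiableOn ℝ (fun s => s * deriv f s) (Ioi 0) := differentiableOn_id.mul hdiff'
  refine antitoneOn_of_deriv_nonpos (convex_Ioi 0) hd.continuousOn (by simpa using hd) ?_
  intro s hs
  rw [interior_Ioi, mem_Ioi] at hs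
  have hfd : DifferentiableAt ℝ (deriv f) s := hdiff'.differentiableAt (isOpen_Ioi.mem_nhds hs)
  -- `(s f')' = s (f'' + f'/s)`
  have h := mul_nonpos_of_nonneg_of_nonpos hs.le (hf'' s hs)
  rw [mul_add, mul_div_cancel₀ _ hs.ne'] at h
  rw [((hasDerivAt_id' s).fun_mul hfd.hasDerivAt).deriv]
  linarith

theorem mul_deriv_mul_log_le_sub {f : ℝ → ℝ} {x : ℝ} (hx : 0 < x)
    (hdiff : DifferentiableOn ℝ f (Ioi 0))
    (hanti : AntitoneOn (fun s => s * deriv f s) (Ioi 0)) :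
    x * deriv f x * log x ≤ f x - f 1 := by
  set c := x * deriv f x
  have hF : ∀ s ∈ Ioi (0 : ℝ), HasDerivAt (fun s => f s - c * log s) (deriv f s - c / s) s := by
    intro s (hs : 0 < s)
    rw [div_eq_mul_inv]
    exact ((hdiff.differentiableAt (isOpen_Ioi.mem_nhds hs)).hasDerivAt).sub
      ((hasDerivAt_log hs.ne').const_mul c)
  have hmax : IsMaxOn (fun s => f s - c * log s) (Ioi 0) x := by
    refine isMaxOn_Ioi_of_deriv_nonneg_of_deriv_nonpos hx
      (fun s hs => (hF s hs).differentiableAt.differentiableWithinAt) ?_ ?_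
    · intro s ⟨hs, hsx⟩
      rw [(hF s hs).deriv, sub_nonneg, div_le_iff₀ hs]
      linarith [hanti hs hx hsx.le]
    · intro s (hxs : x < s)
      have hs : 0 < s := hx.trans hxs
      rw [(hF s hs).deriv, sub_nonpos, le_div_iff₀ hs]
      linarith [hanti hx hs hxs.le]
  have h1 : f 1 - c * log 1 ≤ f x - c * log x := hmax (mem_Ioi.2 one_pos)
  rw [log_one, mul_zero, sub_zero] at h1
  linarith

/-- If `f(1) = 0`, `f' < 0` and `f'' + f'/x ≤ 0` on `ℝ_{>0}`, then for all
`x > 0` and integers `k ≥ 1`: `f(x) + k f'(x) x - k f'(x) x^{1+1/k} ≥ 0`. -/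
theorem stmt16 (f : ℝ → ℝ)
    (hdiff : DifferentiableOn ℝ f (Set.Ioi 0))
    (hdiff' : DifferentiableOn ℝ (deriv f) (Set.Ioi 0))
    (hf1 : f 1 = 0)
    (hf' : ∀ x : ℝ, 0 < x → deriv f x < 0)
    (hf'' : ∀ x : ℝ, 0 < x → deriv (deriv f) x + deriv f x / x ≤ 0) :
    ∀ x : ℝ, 0 < x → ∀ k : ℕ, 1 ≤ k →
      0 ≤ f x + (k : ℝ) * deriv f x * x
          - (k : ℝ) * deriv f x * x ^ (1 + 1 / (k : ℝ)) := by
  intro x hx k hk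
  have hk0 : (0 : ℝ) < k := by exact_mod_cast hk
  have hlog := mul_deriv_mul_log_le_sub hx hdiff (antitoneOn_mul_deriv hdiff' hf'')
  have hc : x * deriv f x ≤ 0 := mul_nonpos_of_nonneg_of_nonpos hx.le (hf' x hx).le
  have hbound := mul_le_mul_of_nonpos_left (log_le_mul_rpow_inv_sub_one hx hk0) hc
  rw [rpow_add hx, rpow_one, one_div]
  linarith
end
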